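/- (Closed form of H_{γθ} S H_{γθ}^⊤.) With S defined as the approximate inverse of V ∈ L_n(m,M) and H_{γθ} the cross Hessian of the log-likelihood, H_{γθ} S H_{γθ}^⊤ = ∑_{i=1}^n v_{ii}^{−1} (∑_{j≠i} w_{ij} Z_{ij})(∑_{j≠i} w_{ij} Z_{ij})^⊤ + ∑_{j=1}^n v_{n+j,n+j}^{−1} (∑_{i≠j} w_{ij} Z_{ij})(∑_{i≠j} w_{ij} Z_{ij})^⊤, where w_{ij} = p_{ij}(1−p_{ij}). -/

import Mathlib

open Finset

variable (n p : ℕ)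

/-- Row sum `v_{ii} = ∑_{j ≠ i} w_{ij}`. -/
def rowSum (w : Fin (n+1) → Fin (n+1) → ℝ) (i : Fin (n+1)) : ℝ :=
  ∑ j ∈ univ.erase i, w i j

/-- Column sum `v_{n+j,n+j} = ∑_{i ≠ j} w_{ij}`. -/
def colSum (w : Fin (n+1) → Fin (n+1) → ℝ) (j : Fin (n+1)) : ℝ :=
  ∑ i ∈ univ.erase j, w i j

/-- The cross Hessian `H_{γθ}` of the log-likelihood: its `(k, i)` entry for
`i` in the α-block is `-∑_{j≠i} w_{ij} Z_{ij,k}` and for `j` in the β-block is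
`-∑_{i≠j} w_{ij} Z_{ij,k}`. -/
def crossHessian (w : Fin (n+1) → Fin (n+1) → ℝ)
    (Z : Fin (n+1) → Fin (n+1) → Fin p → ℝ) :
    Matrix (Fin p) (Fin (n+1) ⊕ Fin n) ℝ :=
  Matrix.of fun k x =>
    match x with
    | .inl i => -∑ j ∈ univ.erase i, w i j * Z i j k
    | .inr j => -∑ i ∈ univ.erase j.castSucc, w i j.castSucc * Z i j.castSucc k

/-- The approximate inverse `S` of the Fisher information matrix built from the
weights `w`: `s_{xy} = δ_{xy}/v_{xx} + 1/v_{2n,2n}` on the diagonal blocks and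
`-1/v_{2n,2n}` on the off blocks, where `v_{2n,2n} = ∑_{i≠n} w_{in}`. -/
noncomputable def SapproxW (w : Fin (n+1) → Fin (n+1) → ℝ) :
    Matrix (Fin (n+1) ⊕ Fin n) (Fin (n+1) ⊕ Fin n) ℝ :=
  let v22 : ℝ := colSum n w (Fin.last n)
  Matrix.of fun x y =>
    match x, y with
    | .inl i, .inl i' => (if i = i' then (rowSum n w i)⁻¹ else 0) + v22⁻¹
    | .inl _, .inr _ => -v22⁻¹
    | .inr _, .inl _ => -v22⁻¹
    | .inr j, .inr j' =>
        (if j = j' then (colSum n w j.castSucc)⁻¹ else 0) + v22⁻¹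

/-!
`S = D + v_{2n,2n}⁻¹ s sᵀ` with `D` diagonal and `s = (1, …, 1, -1, …, -1)`, so
`H S Hᵀ = H D Hᵀ + v_{2n,2n}⁻¹ (H s)(H s)ᵀ`. The vector `H s` is the sum of the first `n`
weighted covariate column sums minus the sum of all row sums; since all row sums and all
column sums have the same total, `H s` is minus the last column sum, and the rank-one term
becomes the `j = n` summand missing from `H D Hᵀ`.
-/

open Matrix

def rowCovSum (w : Fin (n+1) → Fin (n+1) → ℝ) (Z : Fin (n+1) → Fin (n+1) → Fin p → ℝ)
    (i : Fin (n+1)) : Fin p → ℝ :=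
  fun k => ∑ j ∈ univ.erase i, w i j * Z i j k

def colCovSum (w : Fin (n+1) → Fin (n+1) → ℝ) (Z : Fin (n+1) → Fin (n+1) → Fin p → ℝ)
    (j : Fin (n+1)) : Fin p → ℝ :=
  fun k => ∑ i ∈ univ.erase j, w i j * Z i j k

theorem Finset.sum_sum_erase_comm {ι M : Type*} [Fintype ι] [DecidableEq ι] [AddCommGroup M]
    (f : ι → ι → M) :
    ∑ i, ∑ j ∈ univ.erase i, f i j = ∑ j, ∑ i ∈ univ.erase j, f i j := by
  simp only [sum_erase_eq_sub (mem_univ _), sum_sub_distrib]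
  rw [sum_comm]

theorem Matrix.mul_diagonal_mul_transpose_apply {l m R : Type*} [Fintype m] [DecidableEq m]
    [CommSemiring R] (A B : Matrix l m R) (d : m → R) (k k' : l) :
    (A * diagonal d * Bᵀ) k k' = ∑ x, d x * A k x * B k' x := by
  rw [mul_apply]
  simp only [mul_diagonal, transpose_apply]
  exact sum_congr rfl fun x _ => by ring

theorem sum_rowCovSum_eq_sum_colCovSum (w : Fin (n+1) → Fin (n+1) → ℝ)
    (Z : Fin (n+1) → Fin (n+1) → Fin p → ℝ) :
    ∑ i, rowCovSum n p w Z i = ∑ j, colCovSum n p w Z j := by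
  ext k
  simp only [Finset.sum_apply]
  exact sum_sum_erase_comm fun i j => w i j * Z i j k

def blockSign : Fin (n+1) ⊕ Fin n → ℝ := Sum.elim 1 (-1)

theorem SapproxW_eq_diagonal_add_smul_vecMulVec (w : Fin (n+1) → Fin (n+1) → ℝ) :
    SapproxW n w =
      diagonal (Sum.elim (fun i => (rowSum n w i)⁻¹) fun j => (colSum n w j.castSucc)⁻¹) +
        (colSum n w (Fin.last n))⁻¹ • vecMulVec (blockSign n) (blockSign n) := by
  ext (i | j) (i' | j') <;> simp [SapproxW, blockSign, diagonal_apply, vecMulVec_apply]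

@[simp]
theorem crossHessian_apply_inl (w : Fin (n+1) → Fin (n+1) → ℝ)
    (Z : Fin (n+1) → Fin (n+1) → Fin p → ℝ) (k : Fin p) (i : Fin (n+1)) :
    crossHessian n p w Z k (.inl i) = -rowCovSum n p w Z i k := rfl

@[simp]
theorem crossHessian_apply_inr (w : Fin (n+1) → Fin (n+1) → ℝ)
    (Z : Fin (n+1) → Fin (n+1) → Fin p → ℝ) (k : Fin p) (j : Fin n) :
    crossHessian n p w Z k (.inr j) = -colCovSum n p w Z j.castSucc k := rfl

theorem crossHessian_mulVec_blockSign (w : Fin (n+1) → Fin (n+1) → ℝ)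
    (Z : Fin (n+1) → Fin (n+1) → Fin p → ℝ) :
    crossHessian n p w Z *ᵥ blockSign n = -colCovSum n p w Z (Fin.last n) := by
  have htotal := sum_rowCovSum_eq_sum_colCovSum n p w Z
  rw [Fin.sum_univ_castSucc (f := colCovSum n p w Z)] at htotal
  ext k
  have htotal_k := congrFun htotal k
  simp only [Finset.sum_apply, Pi.add_apply] at htotal_k
  simp only [mulVec, dotProduct, Fintype.sum_sum_type, crossHessian_apply_inl,
    crossHessian_apply_inr, blockSign, Sum.elim_inl, Sum.elim_inr, Pi.one_apply, Pi.neg_apply,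
    mul_one, mul_neg, neg_neg, sum_neg_distrib]
  linarith

/-- Closed form of `H_{γθ} S H_{γθ}ᵀ`: the cross terms cancel by the
telescoping identity, leaving a sum of rank-one matrices built from the
weighted row and column sums of the covariates (with the convention
`v_{n+n,n+n} := v_{2n,2n}` for the `j = n` term, which agrees with the column
sum formula). -/
theorem crossHessian_S_crossHessian_transpose
    (w : Fin (n+1) → Fin (n+1) → ℝ) (Z : Fin (n+1) → Fin (n+1) → Fin p → ℝ) :
    crossHessian n p w Z * SapproxW n w * (crossHessian n p w Z).transpose =
      Matrix.of fun k l =>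
        (∑ i, (rowSum n w i)⁻¹ *
          (∑ j ∈ univ.erase i, w i j * Z i j k) *
          (∑ j ∈ univ.erase i, w i j * Z i j l)) +
        ∑ j, (colSum n w j)⁻¹ *
          (∑ i ∈ univ.erase j, w i j * Z i j k) *
          (∑ i ∈ univ.erase j, w i j * Z i j l) := by
  rw [SapproxW_eq_diagonal_add_smul_vecMulVec, Matrix.mul_add, Matrix.add_mul, Matrix.mul_smul,
    Matrix.smul_mul, mul_vecMulVec, vecMulVec_mul, vecMul_transpose,
    crossHessian_mulVec_blockSign]
  ext k l
  simp only [Matrix.add_apply, Matrix.smul_apply, vecMulVec_apply, mul_diagonal_mul_transpose_apply,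
    Fintype.sum_sum_type, crossHessian_apply_inl, crossHessian_apply_inr, Sum.elim_inl,
    Sum.elim_inr, Pi.neg_apply, of_apply, rowCovSum, colCovSum, neg_mul, mul_neg, neg_neg, smul_eq_mul]
  rw [Fin.sum_univ_castSucc (n := n) (f := fun j => (colSum n w j)⁻¹ * _ * _)]
  ring
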